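/- MVTO with garbage collection preserves the read rule: in any history H_gc generated by MVTO with garbage collection, if transaction T_k reads x from committed transaction T_j, then j is the largest timestamp smaller than k among committed writers of x at the time of the read. -/
import Mathlib


/- A framework for software transactional memory histories, following
   the paper "multiversion timestamp ordering STM".  Transactions,
   objects and values are modelled as natural numbers; transaction
   identifiers coincide with their timestamps.  Values written by the
   transactions are assumed unique, so the reads-from relation is
   determined by the events themselves. -/

/-- Transactional events. -/
inductive Event where
  | read   (t x v : ℕ) : Event
  | write  (t x v : ℕ) : Event
  | commit (t : ℕ) : Event
  | abort  (t : ℕ) : Event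
deriving DecidableEq

/-- The transaction issuing an event. -/
def Event.txn : Event → ℕ
  | .read t _ _ => t
  | .write t _ _ => t
  | .commit t => t
  | .abort t => t

/-- A (sequential) history is a finite sequence of events. -/
abbrev History := List Event

/-- `e` occurs strictly before `f` in `H`. -/
def before (H : History) (e f : Event) : Prop :=
  ∃ i j : ℕ, i < j ∧ H[i]? = some e ∧ H[j]? = some f

def committed (H : History) (t : ℕ) : Prop := Event.commit t ∈ H
def abortedTxn (H : History) (t : ℕ) : Prop := Event.abort t ∈ H
def started (H : History) (t : ℕ) : Prop := ∃ e ∈ H, e.txn = t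
def terminated (H : History) (t : ℕ) : Prop := committed H t ∨ abortedTxn H t
def live (H : History) (t : ℕ) : Prop := started H t ∧ ¬ terminated H t
def writesTo (H : History) (t x : ℕ) : Prop := ∃ v, Event.write t x v ∈ H
def readOnly (H : History) (t : ℕ) : Prop := ∀ x v, Event.write t x v ∉ H

/-- `T_k` reads `x` (with value `v`) from the committed transaction `T_j`.
    Since written values are unique, this is determined by the events. -/
def readsFrom (H : History) (j k x v : ℕ) : Prop :=
  Event.read k x v ∈ H ∧ Event.write j x v ∈ H ∧ committed H j

/-- A version order assigns, for every object `x`, an order on the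
    versions `x_i` created by committed transactions:
    `VO x i j` means `x_i ≪ x_j`. -/
abbrev VersionOrder := ℕ → ℕ → ℕ → Prop

/-- `VO` is a (nonreflexive, transitive, total) order on the versions of each
    object created by committed transactions of `H`. -/
def IsVersionOrder (H : History) (VO : VersionOrder) : Prop :=
  (∀ x i j, VO x i j → committed H i ∧ committed H j ∧
      writesTo H i x ∧ writesTo H j x ∧ i ≠ j) ∧
  (∀ x i, ¬ VO x i i) ∧
  (∀ x i j k, VO x i j → VO x j k → VO x i k) ∧
  (∀ x i j, committed H i → committed H j → writesTo H i x → writesTo H j x →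
      i ≠ j → VO x i j ∨ VO x j i)

/-- Real-time edge: `T_i` commits before `T_j` starts (all of `T_j`'s events). -/
def rtEdge (H : History) (i j : ℕ) : Prop :=
  committed H i ∧ started H j ∧
    ∀ e ∈ H, e.txn = j → before H (Event.commit i) e

/-- Reads-from edge: `T_j` reads some object from `T_i`. -/
def rfEdge (H : History) (i j : ℕ) : Prop := ∃ x v, readsFrom H i j x v

/-- Multiversion edges, relative to a version order:
    for each successful read `r_k(x,v)` reading the version created by the
    committed transaction `T_j`, and each (distinct) committed transaction `T_i`
    writing a different value `u` to `x`: an edge `T_i → T_j` if `x_i ≪ x_j`,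
    and an edge `T_k → T_i` if `x_j ≪ x_i`. -/
def mvEdge (H : History) (VO : VersionOrder) (a b : ℕ) : Prop :=
  ∃ x v u j k i, readsFrom H j k x v ∧
    committed H i ∧ Event.write i x u ∈ H ∧ u ≠ v ∧ i ≠ j ∧ i ≠ k ∧
    ((VO x i j ∧ a = i ∧ b = j) ∨ (VO x j i ∧ a = k ∧ b = i))

/-- Edges of the opacity graph `OPG(H, VO)`, with the real-time edges taken
    with respect to the history `Hrt`. -/
def opgEdgeRT (Hrt H : History) (VO : VersionOrder) (a b : ℕ) : Prop :=
  rtEdge Hrt a b ∨ rfEdge H a b ∨ mvEdge H VO a b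

/-- Edges of the opacity graph `OPG(H, VO)`. -/
def opgEdge (H : History) (VO : VersionOrder) : ℕ → ℕ → Prop :=
  opgEdgeRT H H VO

/-- A directed graph (edge relation) on transactions is acyclic. -/
def Acyclic (E : ℕ → ℕ → Prop) : Prop := ∀ t, ¬ Relation.TransGen E t t

/-- `H` is t-sequential: no event of another transaction occurs between two
    events of the same transaction. -/
def tSequential (H : History) : Prop :=
  ∀ e f g, e ∈ H → f ∈ H → g ∈ H → e.txn = g.txn → e.txn ≠ f.txn →
    ¬ (before H e f ∧ before H f g)

/-- `H` is legal: every successful read returns the value written by the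
    last committed transaction writing `x` before it. -/
def legal (H : History) : Prop :=
  ∀ k x v, Event.read k x v ∈ H →
    ∃ j, Event.write j x v ∈ H ∧ committed H j ∧
      before H (Event.commit j) (Event.read k x v) ∧
      ∀ i u, Event.write i x u ∈ H → committed H i →
        before H (Event.commit i) (Event.read k x v) →
        i = j ∨ before H (Event.commit i) (Event.commit j)

/-- `H` is valid: every successful read is preceded by the commit of a
    transaction writing that value to that object. -/
def validH (H : History) : Prop :=
  ∀ k x v, Event.read k x v ∈ H →
    ∃ j, Event.write j x v ∈ H ∧ before H (Event.commit j) (Event.read k x v)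

/-- Two histories are equivalent if they have the same set of events. -/
def equivalentH (H H' : History) : Prop := ∀ e, e ∈ H ↔ e ∈ H'

/-- `Hb` is the completion of `H`: it extends `H` with abort events for
    precisely the incomplete (live) transactions of `H`. -/
def isCompletion (H Hb : History) : Prop :=
  ∃ L : List ℕ, Hb = H ++ L.map Event.abort ∧ L.Nodup ∧
    (∀ t, t ∈ L ↔ live H t)

/-- `S` respects the (transaction-level) real-time order of `H`. -/
def respectsRT (H S : History) : Prop := ∀ i j, rtEdge H i j → rtEdge S i j

/-- Opacity: there is a legal t-sequential history equivalent to the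
    completion of `H` that respects the real-time order of `H`. -/
def isOpaque (H : History) : Prop :=
  ∃ Hb S, isCompletion H Hb ∧ tSequential S ∧ legal S ∧
    equivalentH S Hb ∧ respectsRT H S

/-- The version order `≪_S` induced by a t-sequential history `S`:
    `x_i ≪_S x_j` iff the committed writers `T_i`, `T_j` of `x`
    satisfy `T_i <_S T_j`. -/
def seqVO (S : History) : VersionOrder := fun x i j =>
  committed S i ∧ committed S j ∧ writesTo S i x ∧ writesTo S j x ∧ i ≠ j ∧
    before S (Event.commit i) (Event.commit j)

/-- The timestamp version order `≪_to`: versions are ordered by the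
    timestamps of the committed transactions that created them. -/
def tsVO (H : History) : VersionOrder := fun x i j =>
  committed H i ∧ committed H j ∧ writesTo H i x ∧ writesTo H j x ∧ i < j

/-- `T_j` is the committed writer of `x` with the largest timestamp smaller
    than `l`. -/
def isLargestWriterBelow (H : History) (x l j : ℕ) : Prop :=
  committed H j ∧ writesTo H j x ∧ j < l ∧
    ∀ m, committed H m → writesTo H m x → m < l → m ≤ j

/-- `T_k` is the committed writer of `x` with the smallest timestamp greater
    than `l`. -/
def isSmallestWriterAbove (H : History) (x l k : ℕ) : Prop :=
  committed H k ∧ writesTo H k x ∧ l < k ∧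
    ∀ m, committed H m → writesTo H m x → l < m → k ≤ m

/-- MVTO with garbage collection preserves the read rule.
    `present x t` states that the version of `x` created by `T_t` has not been
    garbage collected; `hdel` is the gc deletion rule and `hreadImpl` says a
    read returns the present version with the largest timestamp below the
    reader.  Then if `T_k` (live at the time of the read, i.e. in `H`, the
    prefix ending with the read) reads `x` from `T_j`, `j` is the largest
    timestamp smaller than `k` among all committed writers of `x`. -/
theorem gc_read_rule (H : History) (present : ℕ → ℕ → Prop)
    (hdel : ∀ x t, committed H t → writesTo H t x → ¬ present x t →
      ∃ k, committed H k ∧ writesTo H k x ∧ t < k ∧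
        ∀ m, t < m → m < k → terminated H m)
    (hreadImpl : ∀ j k x v, readsFrom H j k x v →
      j < k ∧ present x j ∧
        ∀ m, committed H m → writesTo H m x → present x m → m < k → m ≤ j)
    {j k x v : ℕ} (hrf : readsFrom H j k x v) (hlive : live H k) :
    isLargestWriterBelow H x k j := by
  obtain ⟨hread, hwrite, hcomj⟩ := hrf
  obtain ⟨hjk, hpresj, hmax⟩ := hreadImpl j k x v ⟨hread, hwrite, hcomj⟩
  refine ⟨hcomj, ⟨v, hwrite⟩, hjk, ?_⟩
  have main : ∀ d m, k - m ≤ d → committed H m → writesTo H m x → m < k → m ≤ j := by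
    intro d
    induction d with
    | zero => intro m hd _ _ hmk; omega
    | succ d ih =>
      intro m hd hcm hwm hmk
      by_cases hp : present x m
      · exact hmax m hcm hwm hp hmk
      · obtain ⟨k', hck', hwk', hmk', hterm⟩ := hdel x m hcm hwm hp
        have hk'lek : k' ≤ k := by
          by_contra hlt
          exact hlive.2 (hterm k hmk (by omega))
        have hk'ne : k' ≠ k := by
          intro h; subst h; exact hlive.2 (Or.inl hck')
        have := ih k' (by omega) hck' hwk' (by omega)
        omega
  intro m hcm hwm hmk
  exact main (k - m) m le_rfl hcm hwm hmk
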